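/- arXiv:1005.1059 — 3 statements merged into one kernel-verified Lean document; each statement's English description precedes it below -/
import Mathlib

section
/- Let q^1,…,q^K ∈ [0,1]. There exists a sequence m^1,…,m^K of reals such that (q^i) and (m^i) satisfy both the relaxed IC constraint and the IR constraint if and only if q^i ≤ q^{i+1} for all 1 ≤ i ≤ K−1. -/
/-!
Necessity: adding the IC constraints of two types `x^i < x^j` against each other gives
`(q^j - q^i) (x^j - x^i) ≥ 0`. Sufficiency: the envelope (Myerson) payments leave type `i` the
information rent `∑_{k < i} (x^{k+1} - x^k) q^k`; for monotone `q` the rent difference between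
two types is squeezed between the allocations at its two ends times `x^i - x^j`, which is IC, and
the rent is nonnegative when `q ≥ 0`, which is IR.
-/

open Finset

section Mechanism

variable (K : ℕ) (x q m : ℕ → ℝ)

def RelaxedIC : Prop :=
  ∀ i j, 1 ≤ i → i ≤ K → 1 ≤ j → j ≤ K → q i * x i - m i ≥ q j * x i - m j

def IndividuallyRational : Prop :=
  ∀ i, 1 ≤ i → i ≤ K → q i * x i - m i ≥ 0

def informationRent (i : ℕ) : ℝ :=
  ∑ k ∈ Ico 1 i, (x (k + 1) - x k) * q k

def myersonPayment (i : ℕ) : ℝ :=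
  q i * x i - informationRent x q i

end Mechanism

lemma le_of_incentive_pair {xa xb qa qb ma mb : ℝ}
    (ha : qa * xa - ma ≥ qb * xa - mb) (hb : qb * xb - mb ≥ qa * xb - ma) (hx : xa < xb) :
    qa ≤ qb := by
  nlinarith

lemma RelaxedIC.le_succ {K : ℕ} {x q m : ℕ → ℝ} (hIC : RelaxedIC K x q m)
    (hx : ∀ i, 1 ≤ i → i < K → x i < x (i + 1)) :
    ∀ i, 1 ≤ i → i ≤ K - 1 → q i ≤ q (i + 1) := fun i hi hiK ↦
  le_of_incentive_pair (hIC i (i + 1) hi (by omega) (by omega) (by omega))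
    (hIC (i + 1) i (by omega) (by omega) hi (by omega)) (hx i hi (by omega))

lemma monotoneOn_Icc_of_le_succ {α : Type*} [Preorder α] {f : ℕ → α} {a b : ℕ}
    (hf : ∀ i, a ≤ i → i < b → f i ≤ f (i + 1)) : MonotoneOn f (Set.Icc a b) :=
  monotoneOn_of_le_succ Set.ordConnected_Icc fun i _ hi hi' ↦ by
    simp only [Order.succ_eq_add_one, Set.mem_Icc] at hi hi' ⊢
    exact hf i hi.1 (by omega)

section Telescoping

variable {x q : ℕ → ℝ} {a b : ℕ} {c : ℝ}

lemma sum_Ico_sub_mul_le (hab : a ≤ b) (hx : ∀ k ∈ Ico a b, x k ≤ x (k + 1))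
    (hq : ∀ k ∈ Ico a b, q k ≤ c) :
    ∑ k ∈ Ico a b, (x (k + 1) - x k) * q k ≤ c * (x b - x a) :=
  calc ∑ k ∈ Ico a b, (x (k + 1) - x k) * q k
      ≤ ∑ k ∈ Ico a b, (x (k + 1) - x k) * c :=
        sum_le_sum fun k hk ↦ mul_le_mul_of_nonneg_left (hq k hk) (sub_nonneg.2 (hx k hk))
    _ = c * (x b - x a) := by rw [← sum_mul, sum_Ico_sub _ hab, mul_comm]

lemma le_sum_Ico_sub_mul (hab : a ≤ b) (hx : ∀ k ∈ Ico a b, x k ≤ x (k + 1))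
    (hq : ∀ k ∈ Ico a b, c ≤ q k) :
    c * (x b - x a) ≤ ∑ k ∈ Ico a b, (x (k + 1) - x k) * q k :=
  calc c * (x b - x a) = ∑ k ∈ Ico a b, (x (k + 1) - x k) * c := by
        rw [← sum_mul, sum_Ico_sub _ hab, mul_comm]
    _ ≤ ∑ k ∈ Ico a b, (x (k + 1) - x k) * q k :=
        sum_le_sum fun k hk ↦ mul_le_mul_of_nonneg_left (hq k hk) (sub_nonneg.2 (hx k hk))

end Telescoping

section Envelope

variable {K : ℕ} {x q : ℕ → ℝ}

lemma informationRent_sub_informationRent {i j : ℕ} (hj : 1 ≤ j) (hji : j ≤ i) :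
    informationRent x q i - informationRent x q j = ∑ k ∈ Ico j i, (x (k + 1) - x k) * q k := by
  rw [informationRent, informationRent, ← sum_Ico_consecutive _ hj hji, add_sub_cancel_left]

lemma step_le_of_monotoneOn (hx : MonotoneOn x (Set.Icc 1 K)) {k : ℕ} (hk : 1 ≤ k)
    (hkK : k < K) : x k ≤ x (k + 1) :=
  hx ⟨hk, hkK.le⟩ ⟨by omega, hkK⟩ (Nat.le_succ k)

lemma mul_sub_le_informationRent_sub (hx : MonotoneOn x (Set.Icc 1 K))
    (hq : MonotoneOn q (Set.Icc 1 K)) {i j : ℕ} (hi : 1 ≤ i) (hiK : i ≤ K) (hj : 1 ≤ j)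
    (hjK : j ≤ K) :
    q j * (x i - x j) ≤ informationRent x q i - informationRent x q j := by
  rcases le_total j i with hji | hij
  · rw [informationRent_sub_informationRent hj hji]
    refine le_sum_Ico_sub_mul hji (fun k hk ↦ ?_) fun k hk ↦ ?_ <;> rw [mem_Ico] at hk
    · exact step_le_of_monotoneOn hx (by omega) (by omega)
    · exact hq ⟨hj, hjK⟩ ⟨by omega, by omega⟩ hk.1
  · have hrent : informationRent x q j - informationRent x q i ≤ q j * (x j - x i) := by
      rw [informationRent_sub_informationRent hi hij]
      refine sum_Ico_sub_mul_le hij (fun k hk ↦ ?_) fun k hk ↦ ?_ <;> rw [mem_Ico] at hk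
      · exact step_le_of_monotoneOn hx (by omega) (by omega)
      · exact hq ⟨by omega, by omega⟩ ⟨hj, hjK⟩ hk.2.le
    linarith

lemma relaxedIC_myersonPayment (hx : MonotoneOn x (Set.Icc 1 K))
    (hq : MonotoneOn q (Set.Icc 1 K)) : RelaxedIC K x q (myersonPayment x q) := by
  intro i j hi hiK hj hjK
  have := mul_sub_le_informationRent_sub hx hq hi hiK hj hjK
  simp only [myersonPayment]
  linarith

lemma individuallyRational_myersonPayment (hx : MonotoneOn x (Set.Icc 1 K))
    (hq : ∀ k, 1 ≤ k → k ≤ K → 0 ≤ q k) : IndividuallyRational K x q (myersonPayment x q) := by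
  intro i hi hiK
  rw [myersonPayment, sub_sub_cancel]
  refine sum_nonneg fun k hk ↦ ?_
  rw [mem_Ico] at hk
  exact mul_nonneg (sub_nonneg.2 (step_le_of_monotoneOn hx hk.1 (by omega)))
    (hq k hk.1 (by omega))

end Envelope

theorem stmt_4_general (K : ℕ) (x q : ℕ → ℝ)
    (hxlt : ∀ i, 1 ≤ i → i < K → x i < x (i + 1))
    (hq01 : ∀ i, 1 ≤ i → i ≤ K → 0 ≤ q i ∧ q i ≤ 1) :
    (∃ m : ℕ → ℝ,
      (∀ i j, 1 ≤ i → i ≤ K → 1 ≤ j → j ≤ K →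
        q i * x i - m i ≥ q j * x i - m j) ∧
      (∀ i, 1 ≤ i → i ≤ K → q i * x i - m i ≥ 0))
    ↔
    (∀ i, 1 ≤ i → i ≤ K - 1 → q i ≤ q (i + 1)) := by
  change (∃ m, RelaxedIC K x q m ∧ IndividuallyRational K x q m) ↔ _
  refine ⟨fun ⟨_, hIC, _⟩ ↦ hIC.le_succ hxlt, fun hq ↦ ?_⟩
  have hxmono : MonotoneOn x (Set.Icc 1 K) :=
    monotoneOn_Icc_of_le_succ fun i hi hiK ↦ (hxlt i hi hiK).le
  have hqmono : MonotoneOn q (Set.Icc 1 K) :=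
    monotoneOn_Icc_of_le_succ fun i hi hiK ↦ hq i hi (by omega)
  exact ⟨myersonPayment x q, relaxedIC_myersonPayment hxmono hqmono,
    individuallyRational_myersonPayment hxmono fun k hk hkK ↦ (hq01 k hk hkK).1⟩

/-- For q^1,…,q^K ∈ [0,1], a payment rule (m^i) satisfying the
relaxed IC and IR constraints exists iff q^i ≤ q^{i+1} for all 1 ≤ i ≤ K−1. -/
theorem stmt_4 (K : ℕ) (hK : 1 ≤ K) (x q : ℕ → ℝ)
    (hx0 : 0 ≤ x 1)
    (hxlt : ∀ i, 1 ≤ i → i < K → x i < x (i + 1))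
    (hq01 : ∀ i, 1 ≤ i → i ≤ K → 0 ≤ q i ∧ q i ≤ 1) :
    (∃ m : ℕ → ℝ,
      (∀ i j, 1 ≤ i → i ≤ K → 1 ≤ j → j ≤ K →
        q i * x i - m i ≥ q j * x i - m j) ∧
      (∀ i, 1 ≤ i → i ≤ K → q i * x i - m i ≥ 0))
    ↔
    (∀ i, 1 ≤ i → i ≤ K - 1 → q i ≤ q (i + 1)) :=
  stmt_4_general K x q hxlt hq01
end

section
/- If 0 ≤ i < j ≤ K are indices with h̄^i = h^i and h̄^j = h^j, then Σ_{l=i+1}^j p^l·w^l = Σ_{l=i+1}^j p^l·w̄^l. -/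
/-!
As `h^i` is minus the revenue of posting price `x^{i+1}`, the weighted virtual value is a
revenue difference, `p^l w^l = h^l - h^{l-1}`; and as `g^l - g^{l-1} = p^l`, likewise
`p^l w̄^l = h̄^l - h̄^{l-1}`. Both sums therefore telescope, to `h^j - h^i` and `h̄^j - h̄^i`,
which agree when the hull touches the curve at `i` and `j`.
-/

open Finset

lemma Finset.sum_Icc_succ_sub_pred {M : Type*} [AddCommGroup M] (f : ℕ → M) {i j : ℕ}
    (hij : i ≤ j) : ∑ l ∈ Icc (i + 1) j, (f l - f (l - 1)) = f j - f i := by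
  induction j, hij using Nat.le_induction with
  | base => simp
  | succ n hin ih =>
    rw [sum_Icc_succ_top (by omega), ih, Nat.add_sub_cancel]
    abel

lemma Finset.sum_Icc_sub_sum_Icc_pred {M : Type*} [AddCommGroup M] (f : ℕ → M) {a l : ℕ}
    (hal : a ≤ l) (hl : 0 < l) : ∑ k ∈ Icc a l, f k - ∑ k ∈ Icc a (l - 1), f k = f l := by
  obtain ⟨m, rfl⟩ : ∃ m, l = m + 1 := ⟨l - 1, by omega⟩
  rw [sum_Icc_succ_top hal, Nat.add_sub_cancel]
  abel

lemma Finset.sum_Icc_eq_add_sum_Icc_succ {M : Type*} [AddCommMonoid M] (f : ℕ → M) {l K : ℕ}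
    (hlK : l ≤ K) : ∑ k ∈ Icc l K, f k = f l + ∑ k ∈ Icc (l + 1) K, f k := by
  rw [Icc_add_one_left_eq_Ioc, add_sum_Ioc_eq_sum_Icc hlK]

lemma mul_virtualValuation_eq_sub {K l : ℕ} {x p w h : ℕ → ℝ} (hl : 1 ≤ l) (hlK : l ≤ K)
    (hpl : p l ≠ 0)
    (hw : l ≤ K - 1 → w l = x l - (x (l + 1) - x l) * (∑ k ∈ Icc (l + 1) K, p k) / p l)
    (hwK : w K = x K) (hh : ∀ i ≤ K, h i = -x (i + 1) * ∑ k ∈ Icc (i + 1) K, p k) :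
    p l * w l = h l - h (l - 1) := by
  have hpred : l - 1 + 1 = l := by omega
  rw [hh l hlK, hh (l - 1) (by omega), hpred, sum_Icc_eq_add_sum_Icc_succ p hlK]
  rcases hlK.lt_or_eq with hlt | rfl
  · rw [hw (by omega)]
    field_simp
    ring
  · rw [hwK, Icc_eq_empty (by omega), sum_empty]
    ring

theorem stmt_9_general (K : ℕ) (x p w : ℕ → ℝ)
    (hp : ∀ i, 1 ≤ i → i ≤ K → 0 < p i)
    (hw : ∀ i, 1 ≤ i → i ≤ K - 1 →
      w i = x i - (x (i + 1) - x i) * (∑ j ∈ Finset.Icc (i + 1) K, p j) / p i)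
    (hwK : w K = x K)
    (g h hbar wbar : ℕ → ℝ)
    (hg : ∀ i ≤ K, g i = ∑ j ∈ Finset.Icc 1 i, p j)
    (hh : ∀ i ≤ K, h i = -x (i + 1) * ∑ j ∈ Finset.Icc (i + 1) K, p j)
    (hwbar : ∀ i, 1 ≤ i → i ≤ K →
      wbar i = (hbar i - hbar (i - 1)) / (g i - g (i - 1)))
    (i j : ℕ) (hij : i < j) (hjK : j ≤ K)
    (hi : hbar i = h i) (hj : hbar j = h j) :
    ∑ l ∈ Finset.Icc (i + 1) j, p l * w l =
      ∑ l ∈ Finset.Icc (i + 1) j, p l * wbar l := by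
  have hpw : ∀ l ∈ Icc (i + 1) j, p l * w l = h l - h (l - 1) := fun l hl => by
    obtain ⟨hil, hlj⟩ := mem_Icc.mp hl
    exact mul_virtualValuation_eq_sub (by omega) (by omega) (hp l (by omega) (by omega)).ne'
      (hw l (by omega)) hwK hh
  have hpwbar : ∀ l ∈ Icc (i + 1) j, p l * wbar l = hbar l - hbar (l - 1) := fun l hl => by
    obtain ⟨hil, hlj⟩ := mem_Icc.mp hl
    have hgp : g l - g (l - 1) = p l := by
      rw [hg l (by omega), hg (l - 1) (by omega), sum_Icc_sub_sum_Icc_pred p (by omega) (by omega)]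
    rw [hwbar l (by omega) (by omega), hgp, mul_div_cancel₀ _ (hp l (by omega) (by omega)).ne']
  rw [sum_congr rfl hpw, sum_congr rfl hpwbar, sum_Icc_succ_sub_pred h hij.le,
    sum_Icc_succ_sub_pred hbar hij.le, hi, hj]

/-- If 0 ≤ i < j ≤ K with h̄^i = h^i and h̄^j = h^j, then
Σ_{l=i+1}^j p^l·w^l = Σ_{l=i+1}^j p^l·w̄^l. -/
theorem stmt_9 (K : ℕ) (hK : 1 ≤ K) (x p w : ℕ → ℝ)
    (hx0 : 0 ≤ x 1)
    (hxlt : ∀ i, 1 ≤ i → i < K → x i < x (i + 1))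
    (hp : ∀ i, 1 ≤ i → i ≤ K → 0 < p i)
    (hp1 : ∑ i ∈ Finset.Icc 1 K, p i = 1)
    (hw : ∀ i, 1 ≤ i → i ≤ K - 1 →
      w i = x i - (x (i + 1) - x i) * (∑ j ∈ Finset.Icc (i + 1) K, p j) / p i)
    (hwK : w K = x K)
    (g h hbar wbar : ℕ → ℝ)
    (hg : ∀ i ≤ K, g i = ∑ j ∈ Finset.Icc 1 i, p j)
    (hh : ∀ i ≤ K, h i = -x (i + 1) * ∑ j ∈ Finset.Icc (i + 1) K, p j)
    (hbar_min : ∀ i ≤ K, IsLeast {y : ℝ |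
        ((g i, y) : ℝ × ℝ) ∈ convexHull ℝ {P : ℝ × ℝ | ∃ j ≤ K, P = (g j, h j)}}
      (hbar i))
    (hwbar : ∀ i, 1 ≤ i → i ≤ K →
      wbar i = (hbar i - hbar (i - 1)) / (g i - g (i - 1)))
    (i j : ℕ) (hij : i < j) (hjK : j ≤ K)
    (hi : hbar i = h i) (hj : hbar j = h j) :
    ∑ l ∈ Finset.Icc (i + 1) j, p l * w l =
      ∑ l ∈ Finset.Icc (i + 1) j, p l * wbar l :=
  stmt_9_general K x p w hp hw hwK g h hbar wbar hg hh hwbar i j hij hjK hi hj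
end

section
/- Assume x^K > 0, and let k* be the largest index i ∈ {1,…,K} maximizing x^i·(Σ_{j=i}^K p^j). Then w̄^i ≤ 0 for all 1 ≤ i < k*, and w̄^i > 0 for all k* ≤ i ≤ K. -/
/-!
Since `h^j = -x^{j+1} Σ_{l>j} p^l`, the point `(g^{k*-1}, h^{k*-1})` is the lowest of the `K + 1`
points and strictly lower than every point to its right (`k*` is the largest revenue maximiser).
A horizontal line through it supports all points, so it lies on the lower hull and `h̄ ≥ h^{k*-1}`;
tilting that line to a small positive slope still supports all points, so `h̄^i > h̄^{k*-1}` for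
`i ≥ k*`. Convexity of `h̄` along the strictly increasing abscissae `g^i` turns these two facts
into the signs of the consecutive slopes `w̄^i`.
-/

open Set Filter Topology

lemma convex_setOf_mul_add_le (a c : ℝ) : Convex ℝ {P : ℝ × ℝ | a * P.1 + c ≤ P.2} := by
  have hset : {P : ℝ × ℝ | a * P.1 + c ≤ P.2} =
      (LinearMap.snd ℝ ℝ ℝ - a • LinearMap.fst ℝ ℝ ℝ) ⁻¹' Ici c := by
    ext P
    simp [le_sub_iff_add_le, add_comm]
  exact hset ▸ (convex_Ici c).linear_preimage _

lemma mul_add_le_of_mem_convexHull {S : Set (ℝ × ℝ)} {a c u v : ℝ}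
    (hS : ∀ P ∈ S, a * P.1 + c ≤ P.2) (huv : (u, v) ∈ convexHull ℝ S) : a * u + c ≤ v :=
  convexHull_min hS (convex_setOf_mul_add_le a c) huv

lemma mul_le_of_mem_convex {T : Set (ℝ × ℝ)} (hT : Convex ℝ T) {u₁ u₂ u₃ y₁ y₂ y₃ : ℝ}
    (h₁ : (u₁, y₁) ∈ T) (h₃ : (u₃, y₃) ∈ T) (h₂ : y₂ ∈ lowerBounds {y | (u₂, y) ∈ T})
    (h₁₂ : u₁ ≤ u₂) (h₂₃ : u₂ ≤ u₃) :
    y₂ * (u₃ - u₁) ≤ y₁ * (u₃ - u₂) + y₃ * (u₂ - u₁) := by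
  rcases (h₁₂.trans h₂₃).eq_or_lt with h₁₃ | h₁₃
  · have : u₂ = u₁ := by linarith
    simp [this, h₁₃]
  have hd : 0 < u₃ - u₁ := sub_pos.2 h₁₃
  set s := (u₃ - u₂) / (u₃ - u₁)
  set t := (u₂ - u₁) / (u₃ - u₁)
  have hs : 0 ≤ s := div_nonneg (by linarith) hd.le
  have ht : 0 ≤ t := div_nonneg (by linarith) hd.le
  have hmem := hT h₁ h₃ hs ht (by simp only [s, t]; field_simp; ring)
  have hcombo : s • (u₁, y₁) + t • (u₃, y₃) = (u₂, s * y₁ + t * y₃) := by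
    refine Prod.ext ?_ rfl
    simp only [s, t, Prod.fst_add, Prod.smul_fst, smul_eq_mul]
    field_simp
    ring
  have hle : y₂ ≤ s * y₁ + t * y₃ := h₂ (by rwa [hcombo] at hmem)
  calc y₂ * (u₃ - u₁) ≤ (s * y₁ + t * y₃) * (u₃ - u₁) := by gcongr
    _ = y₁ * (u₃ - u₂) + y₃ * (u₂ - u₁) := by simp only [s, t]; field_simp

lemma exists_pos_forall_add_mul_sub_le {ι : Type*} (s : Finset ι) {u v : ι → ℝ} {u₀ v₀ : ℝ}
    (hle : ∀ j ∈ s, u j ≤ u₀ → v₀ ≤ v j) (hlt : ∀ j ∈ s, u₀ < u j → v₀ < v j) :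
    ∃ c > 0, ∀ j ∈ s, v₀ + c * (u j - u₀) ≤ v j := by
  have hev : ∀ᶠ c in 𝓝[>] (0 : ℝ), 0 < c ∧ ∀ j ∈ s, v₀ + c * (u j - u₀) ≤ v j := by
    refine eventually_mem_nhdsWithin.and ((eventually_all_finset s).2 fun j hj => ?_)
    rcases le_or_gt (u j) u₀ with hj₀ | hj₀
    · filter_upwards [eventually_mem_nhdsWithin] with c (hc : 0 < c)
      nlinarith [hle j hj hj₀]
    · have hcont : Tendsto (fun c : ℝ => v₀ + c * (u j - u₀)) (𝓝 0) (𝓝 v₀) :=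
        Continuous.tendsto' (by fun_prop) 0 v₀ (by simp)
      exact nhdsWithin_le_nhds (hcont.eventually (ge_mem_nhds (hlt j hj hj₀)))
  exact hev.exists

def IsLowerHull (K : ℕ) (g h hbar : ℕ → ℝ) : Prop :=
  ∀ i ≤ K, IsLeast {y : ℝ |
    ((g i, y) : ℝ × ℝ) ∈ convexHull ℝ {P : ℝ × ℝ | ∃ j ≤ K, P = (g j, h j)}} (hbar i)

namespace IsLowerHull

variable {K : ℕ} {g h hbar : ℕ → ℝ}

lemma le (hull : IsLowerHull K g h hbar) {i : ℕ} (hi : i ≤ K) : hbar i ≤ h i :=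
  (hull i hi).2 (subset_convexHull ℝ _ ⟨i, hi, rfl⟩)

lemma mul_add_le (hull : IsLowerHull K g h hbar) {a c : ℝ} (hline : ∀ j ≤ K, a * g j + c ≤ h j)
    {i : ℕ} (hi : i ≤ K) : a * g i + c ≤ hbar i :=
  mul_add_le_of_mem_convexHull (by rintro _ ⟨j, hj, rfl⟩; exact hline j hj) (hull i hi).1

lemma mul_le (hull : IsLowerHull K g h hbar) {a b c : ℕ} (ha : a ≤ K) (hb : b ≤ K) (hc : c ≤ K)
    (hab : g a ≤ g b) (hbc : g b ≤ g c) :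
    hbar b * (g c - g a) ≤ hbar a * (g c - g b) + hbar c * (g b - g a) :=
  mul_le_of_mem_convex (convex_convexHull ℝ _) (hull a ha).1 (hull c hc).1 (hull b hb).2 hab hbc

lemma eq_and_le_of_forall_le (hull : IsLowerHull K g h hbar) {m : ℕ} (hm : m ≤ K)
    (hmin : ∀ j ≤ K, h m ≤ h j) : hbar m = h m ∧ ∀ i ≤ K, h m ≤ hbar i := by
  have hge : ∀ i ≤ K, h m ≤ hbar i := fun i hi => by
    simpa using hull.mul_add_le (a := 0) (fun j hj => by simpa using hmin j hj) hi
  exact ⟨(hull.le hm).antisymm (hge m hm), hge⟩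

lemma lt_of_forall_lt (hull : IsLowerHull K g h hbar) (hg : StrictMonoOn g (Iic K)) {m : ℕ}
    (hm : m ≤ K) (hmin : ∀ j ≤ K, h m ≤ h j) (hlt : ∀ j ≤ K, m < j → h m < h j)
    {i : ℕ} (hi : i ≤ K) (hmi : m < i) : h m < hbar i := by
  obtain ⟨c, hc, hline⟩ := exists_pos_forall_add_mul_sub_le (Finset.Iic K) (u₀ := g m)
    (fun j hj _ => hmin j (Finset.mem_Iic.1 hj))
    (fun j hj hgj => hlt j (Finset.mem_Iic.1 hj) ((hg.lt_iff_lt hm (Finset.mem_Iic.1 hj)).1 hgj))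
  have hbound := hull.mul_add_le (a := c) (c := h m - c * g m)
    (fun j hj => by linarith [hline j (Finset.mem_Iic.2 hj)]) hi
  nlinarith [hg hm hi hmi]

lemma succ_le (hull : IsLowerHull K g h hbar) (hg : StrictMonoOn g (Iic K)) {i m : ℕ}
    (hmK : m ≤ K) (him : i < m) (hmi : hbar m ≤ hbar i) : hbar (i + 1) ≤ hbar i := by
  have hchord := hull.mul_le (a := i) (b := i + 1) (c := m) (by omega) (by omega) hmK
    (hg.monotoneOn (mem_Iic.2 (by omega)) (mem_Iic.2 (by omega)) (by omega))
    (hg.monotoneOn (mem_Iic.2 (by omega)) hmK him)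
  have hgi : g i < g m := hg (mem_Iic.2 (by omega)) hmK him
  nlinarith [hg.monotoneOn (mem_Iic.2 (by omega)) (mem_Iic.2 (by omega)) (Nat.le_succ i)]

lemma lt_succ (hull : IsLowerHull K g h hbar) (hg : StrictMonoOn g (Iic K)) {i m : ℕ}
    (hmi : m ≤ i) (hiK : i < K) (hlt : hbar m < hbar (i + 1)) : hbar i < hbar (i + 1) := by
  have hchord := hull.mul_le (a := m) (b := i) (c := i + 1) (by omega) (by omega) hiK
    (hg.monotoneOn (mem_Iic.2 (by omega)) (mem_Iic.2 (by omega)) hmi)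
    (hg.monotoneOn (mem_Iic.2 (by omega)) hiK (Nat.le_succ i))
  have hgi : g i < g (i + 1) := hg (mem_Iic.2 (by omega)) hiK (Nat.lt_succ_self i)
  nlinarith [hg.monotoneOn (mem_Iic.2 (by omega)) (mem_Iic.2 (by omega)) hmi]

end IsLowerHull

lemma strictMonoOn_Iic_of_eq_sum {K : ℕ} {p g : ℕ → ℝ} (hp : ∀ i, 1 ≤ i → i ≤ K → 0 < p i)
    (hg : ∀ i ≤ K, g i = ∑ j ∈ Finset.Icc 1 i, p j) : StrictMonoOn g (Iic K) := by
  refine strictMonoOn_of_lt_add_one ordConnected_Iic fun i _ hi hi' => ?_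
  rw [mem_Iic] at hi hi'
  rw [hg i hi, hg (i + 1) hi', Finset.sum_Icc_succ_top (by omega)]
  linarith [hp (i + 1) (by omega) hi']

/-- In the paper's notation `h^j = -revenue (j + 1)`, also for `j = K`: the sum is empty there. -/
def revenue (K : ℕ) (x p : ℕ → ℝ) (i : ℕ) : ℝ := x i * ∑ j ∈ Finset.Icc i K, p j

lemma le_and_lt_of_isGreatest_revenue {K m : ℕ} {x p h : ℕ → ℝ} (hmK : m < K) (hxK : 0 < x K)
    (hpK : 0 < p K) (hmax : ∀ i, 1 ≤ i → i ≤ K → revenue K x p i ≤ revenue K x p (m + 1))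
    (hlargest : ∀ i, 1 ≤ i → i ≤ K → revenue K x p i = revenue K x p (m + 1) → i ≤ m + 1)
    (hh : ∀ j ≤ K, h j = -revenue K x p (j + 1)) :
    (∀ j ≤ K, h m ≤ h j) ∧ ∀ j ≤ K, m < j → h m < h j := by
  have hlast : revenue K x p (K + 1) = 0 := by simp [revenue]
  have hpos : 0 < revenue K x p (m + 1) :=
    (mul_pos hxK (by simpa using hpK)).trans_le (hmax K (by omega) le_rfl)
  have hle : ∀ j ≤ K, revenue K x p (j + 1) ≤ revenue K x p (m + 1) := fun j hj => by
    rcases hj.lt_or_eq with hj | rfl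
    · exact hmax (j + 1) (by omega) hj
    · linarith
  refine ⟨fun j hj => by linarith [hh m hmK.le, hh j hj, hle j hj], fun j hj hmj => ?_⟩
  rw [hh m hmK.le, hh j hj, neg_lt_neg_iff]
  refine (hle j hj).lt_of_ne fun heq => ?_
  rcases hj.lt_or_eq with hj | rfl
  · exact absurd (hlargest (j + 1) (by omega) hj heq) (by omega)
  · linarith

theorem stmt_15_general (K : ℕ) (hK : 1 ≤ K) (x p : ℕ → ℝ)
    (hxK : 0 < x K)
    (hp : ∀ i, 1 ≤ i → i ≤ K → 0 < p i)
    (g h hbar wbar : ℕ → ℝ)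
    (hg : ∀ i ≤ K, g i = ∑ j ∈ Finset.Icc 1 i, p j)
    (hh : ∀ i ≤ K, h i = -x (i + 1) * ∑ j ∈ Finset.Icc (i + 1) K, p j)
    (hbar_min : ∀ i ≤ K, IsLeast {y : ℝ |
        ((g i, y) : ℝ × ℝ) ∈ convexHull ℝ {P : ℝ × ℝ | ∃ j ≤ K, P = (g j, h j)}}
      (hbar i))
    (hwbar : ∀ i, 1 ≤ i → i ≤ K →
      wbar i = (hbar i - hbar (i - 1)) / (g i - g (i - 1)))
    (kstar : ℕ) (hk1 : 1 ≤ kstar) (hk2 : kstar ≤ K)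
    (hkmax : ∀ i, 1 ≤ i → i ≤ K →
      x i * ∑ j ∈ Finset.Icc i K, p j ≤ x kstar * ∑ j ∈ Finset.Icc kstar K, p j)
    (hklargest : ∀ i, 1 ≤ i → i ≤ K →
      x i * ∑ j ∈ Finset.Icc i K, p j = x kstar * ∑ j ∈ Finset.Icc kstar K, p j →
      i ≤ kstar) :
    (∀ i, 1 ≤ i → i < kstar → wbar i ≤ 0) ∧
    (∀ i, kstar ≤ i → i ≤ K → 0 < wbar i) := by
  obtain ⟨m, rfl⟩ : ∃ m, kstar = m + 1 := ⟨kstar - 1, by omega⟩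
  have hull : IsLowerHull K g h hbar := hbar_min
  have hgK : StrictMonoOn g (Iic K) := strictMonoOn_Iic_of_eq_sum hp hg
  obtain ⟨hmin, hlt⟩ := le_and_lt_of_isGreatest_revenue (h := h) hk2 hxK (hp K hK le_rfl)
    hkmax hklargest fun j hj => by rw [hh j hj, neg_mul, revenue]
  obtain ⟨hbar_m, hbar_ge⟩ := hull.eq_and_le_of_forall_le (by omega) hmin
  have hdenom : ∀ i < K, 0 < g (i + 1) - g i := fun i hi =>
    sub_pos.2 (hgK (mem_Iic.2 (by omega)) (mem_Iic.2 hi) (Nat.lt_succ_self i))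
  refine ⟨fun i hi hik => ?_, fun i hki hiK => ?_⟩ <;>
    obtain ⟨i, rfl⟩ : ∃ n, i = n + 1 := ⟨i - 1, by omega⟩ <;>
    rw [hwbar _ (by omega) (by omega), Nat.add_sub_cancel]
  · refine div_nonpos_of_nonpos_of_nonneg (sub_nonpos.2 ?_) (hdenom i (by omega)).le
    exact hull.succ_le hgK (by omega) (by omega) (hbar_m ▸ hbar_ge i (by omega))
  · refine div_pos (sub_pos.2 ?_) (hdenom i (by omega))
    exact hull.lt_succ hgK (by omega) (by omega)
      (hbar_m ▸ hull.lt_of_forall_lt hgK (by omega) hmin hlt hiK (by omega))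

/-- If x^K > 0 and k* is the largest maximizer of
x^i·Σ_{j=i}^K p^j over 1 ≤ i ≤ K, then w̄^i ≤ 0 for 1 ≤ i < k* and
w̄^i > 0 for k* ≤ i ≤ K. -/
theorem stmt_15 (K : ℕ) (hK : 1 ≤ K) (x p : ℕ → ℝ)
    (hx0 : 0 ≤ x 1)
    (hxlt : ∀ i, 1 ≤ i → i < K → x i < x (i + 1))
    (hxK : 0 < x K)
    (hp : ∀ i, 1 ≤ i → i ≤ K → 0 < p i)
    (hp1 : ∑ i ∈ Finset.Icc 1 K, p i = 1)
    (g h hbar wbar : ℕ → ℝ)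
    (hg : ∀ i ≤ K, g i = ∑ j ∈ Finset.Icc 1 i, p j)
    (hh : ∀ i ≤ K, h i = -x (i + 1) * ∑ j ∈ Finset.Icc (i + 1) K, p j)
    (hbar_min : ∀ i ≤ K, IsLeast {y : ℝ |
        ((g i, y) : ℝ × ℝ) ∈ convexHull ℝ {P : ℝ × ℝ | ∃ j ≤ K, P = (g j, h j)}}
      (hbar i))
    (hwbar : ∀ i, 1 ≤ i → i ≤ K →
      wbar i = (hbar i - hbar (i - 1)) / (g i - g (i - 1)))
    (kstar : ℕ) (hk1 : 1 ≤ kstar) (hk2 : kstar ≤ K)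
    (hkmax : ∀ i, 1 ≤ i → i ≤ K →
      x i * ∑ j ∈ Finset.Icc i K, p j ≤ x kstar * ∑ j ∈ Finset.Icc kstar K, p j)
    (hklargest : ∀ i, 1 ≤ i → i ≤ K →
      x i * ∑ j ∈ Finset.Icc i K, p j = x kstar * ∑ j ∈ Finset.Icc kstar K, p j →
      i ≤ kstar) :
    (∀ i, 1 ≤ i → i < kstar → wbar i ≤ 0) ∧
    (∀ i, kstar ≤ i → i ≤ K → 0 < wbar i) :=
  stmt_15_general K hK x p hxK hp g h hbar wbar hg hh hbar_min hwbar kstar hk1 hk2 hkmax hklargest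
end
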